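/- Under the same moment conditions on H' and H'' as before, for k = α: ∫_{-1}^{1} (ξh − Δ)^α · ((Δ/h)·H''(ξ) − H'(ξ)) dξ = (α − 1)·(−Δ)^α − π_U · h^α, where π_U := ∫_{-1}^{1} ξ^α H'(ξ) dξ. -/

import Mathlib

open MeasureTheory Finset

/-!
Expanding `(ξ h - Δ)^α` binomially turns the integral into a combination of the moments
`∫ ξ^j ((Δ/h) H'' - H')`. By the moment conditions these vanish for `2 ≤ j < α`, so only
`j = 0` (giving `-(-Δ)^α`), `j = 1` (giving `α (-Δ)^α`, the factor `h` cancelling `Δ/h`) and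
`j = α` (giving `-π_U h^α`) survive.
-/

section Moments

variable {μ : Measure ℝ} {a b : ℝ}

theorem intervalIntegral_mul_sub_pow_mul_eq_sum_moments {f : ℝ → ℝ}
    (hf : IntervalIntegrable f μ a b) (h c : ℝ) (n : ℕ) :
    ∫ ξ in a..b, (ξ * h - c) ^ n * f ξ ∂μ
      = ∑ j ∈ range (n + 1),
          (n.choose j : ℝ) * h ^ j * (-c) ^ (n - j) * ∫ ξ in a..b, ξ ^ j * f ξ ∂μ := by
  have hmoment (j : ℕ) : IntervalIntegrable (fun ξ ↦ ξ ^ j * f ξ) μ a b :=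
    hf.continuousOn_mul (continuous_pow j).continuousOn
  simp_rw [← intervalIntegral.integral_const_mul]
  rw [← intervalIntegral.integral_finsetSum fun j _ ↦ (hmoment j).const_mul _]
  refine intervalIntegral.integral_congr fun ξ _ ↦ ?_
  simp only [sub_eq_add_neg (ξ * h), add_pow, sum_mul]
  exact sum_congr rfl fun j _ ↦ by ring

theorem intervalIntegral_pow_mul_const_mul_sub {f g : ℝ → ℝ}
    (hf : IntervalIntegrable f μ a b) (hg : IntervalIntegrable g μ a b) (r : ℝ) (j : ℕ) :
    ∫ ξ in a..b, ξ ^ j * (r * f ξ - g ξ) ∂μ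
      = r * ∫ ξ in a..b, ξ ^ j * f ξ ∂μ - ∫ ξ in a..b, ξ ^ j * g ξ ∂μ := by
  have hpow : ContinuousOn (fun ξ : ℝ ↦ ξ ^ j) (Set.uIcc a b) :=
    (continuous_pow j).continuousOn
  simp only [mul_sub, mul_left_comm _ r]
  rw [intervalIntegral.integral_sub ((hf.continuousOn_mul hpow).const_mul r)
    (hg.continuousOn_mul hpow), intervalIntegral.integral_const_mul]

end Moments

theorem sum_range_succ_eq_of_eq_zero_of_two_le {M : Type*} [AddCommMonoid M] {n : ℕ}
    (hn : 2 ≤ n) {f : ℕ → M} (hf : ∀ j, 2 ≤ j → j < n → f j = 0) :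
    ∑ j ∈ range (n + 1), f j = f 0 + f 1 + f n := by
  obtain ⟨m, rfl⟩ := Nat.exists_eq_add_of_le' hn
  have hmid : ∑ i ∈ range m, f (i + 2) = 0 :=
    sum_eq_zero fun i hi ↦ hf _ (by omega) (by simp at hi; omega)
  rw [sum_range_succ, sum_range_succ', sum_range_succ', hmid]
  abel

theorem stmt6 (α : ℕ) (hα : 2 ≤ α) (h : ℝ) (hh : 0 < h)
    (H : ℝ → ℝ) (hH : ContDiff ℝ 2 H)
    (hm0 : ∫ ξ in (-1:ℝ)..1, deriv H ξ = 1)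
    (hm1 : ∀ j : ℕ, 1 ≤ j → j ≤ α - 1 → ∫ ξ in (-1:ℝ)..1, ξ ^ j * deriv H ξ = 0)
    (hm2 : ∫ ξ in (-1:ℝ)..1, ξ * deriv (deriv H) ξ = -1)
    (hm3 : ∫ ξ in (-1:ℝ)..1, deriv (deriv H) ξ = 0)
    (hm4 : ∀ j : ℕ, 2 ≤ j → j ≤ α → ∫ ξ in (-1:ℝ)..1, ξ ^ j * deriv (deriv H) ξ = 0)
    (πU : ℝ) (hπU : πU = ∫ ξ in (-1:ℝ)..1, ξ ^ α * deriv H ξ) :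
    ∀ Δ : ℝ,
      ∫ ξ in (-1:ℝ)..1,
          (ξ * h - Δ) ^ α * ((Δ / h) * deriv (deriv H) ξ - deriv H ξ)
        = ((α:ℝ) - 1) * (-Δ) ^ α - πU * h ^ α := by
  intro Δ
  have hH' : Continuous (deriv H) := hH.continuous_deriv one_le_two
  have hH'' : Continuous (deriv (deriv H)) := (hH.iterate_deriv' 1 1).continuous_deriv le_rfl
  have hmoment (j : ℕ) := intervalIntegral_pow_mul_const_mul_sub (μ := volume)
    (hH''.intervalIntegrable (-1) 1) (hH'.intervalIntegrable (-1) 1) (Δ / h) j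
  have hf : Continuous fun ξ ↦ Δ / h * deriv (deriv H) ξ - deriv H ξ := by fun_prop
  rw [intervalIntegral_mul_sub_pow_mul_eq_sum_moments (hf.intervalIntegrable _ _),
    sum_range_succ_eq_of_eq_zero_of_two_le hα fun j hj2 hjα ↦ by
      rw [hmoment, hm4 j hj2 hjα.le, hm1 j (by omega) (by omega)]; ring]
  have hm1' : ∫ ξ in (-1:ℝ)..1, ξ * deriv H ξ = 0 := by simpa using hm1 1 le_rfl (by omega)
  rw [hmoment 0, hmoment 1, hmoment α]
  simp only [pow_zero, pow_one, one_mul, hm0, hm1', hm2, hm3, hm4 α hα le_rfl, ← hπU,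
    Nat.choose_zero_right, Nat.choose_one_right, Nat.choose_self, Nat.sub_zero, Nat.sub_self,
    Nat.cast_one]
  have hpow : (-Δ) ^ α = (-Δ) ^ (α - 1) * (-Δ) := by
    rw [← pow_succ, Nat.sub_add_cancel (by omega)]
  rw [hpow]
  field_simp
  ring
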